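/- arXiv:0712.2293 — 4 statements merged into one kernel-verified Lean document; each statement's English description precedes it below -/
import Mathlib

section
/- For integers 0 ≤ p ≤ l, the polynomial identity Σ_{i=0}^{p} C(p,i)·C(l−p+i, i)·C(l,i)^{−1}·x^{p−i} = Σ_{j=0}^{p} C(p,j)·C(2l−p+1, j)·C(l,j)^{−1}·(x−1)^{p−j} holds in ℚ[x]. -/
/-!
Expanding each `(X - 1) ^ (p - j)` binomially and collecting the coefficient of `X ^ (p - i)`
reduces the identity to one for each `i ≤ p`. Trading `C(p,j) C(p-j,i-j)` for `C(p,i) C(i,j)`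
and `C(i,j) / C(l,j)` for `C(l-j,i-j) / C(l,i)` turns it into the Chu–Vandermonde identity
`∑ C(2l-p+1, j) C(-(l-i+1), i-j) = C(l-p+i, i)`, whose negative upper index absorbs the signs.
-/

open Finset Polynomial

-- Chu–Vandermonde for the upper indices `a + r + 1` and `-(r + 1)`.
theorem sum_range_neg_one_pow_mul_choose_mul_choose (a r i : ℕ) :
    ∑ j ∈ range (i + 1),
        (-1 : ℤ) ^ (i - j) * ((a + r + 1).choose j * (r + (i - j)).choose (i - j))
      = a.choose i := by
  have hneg (k : ℕ) : Ring.choose (-(r + 1 : ℤ)) k = (-1) ^ k * (r + k).choose k := by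
    rw [Ring.choose_neg, Units.smul_def, Int.coe_negOnePow_natCast, smul_eq_mul,
      ← Ring.choose_natCast]
    push_cast
    ring_nf
  have h := Ring.add_choose_eq (r := ((a + r + 1 : ℕ) : ℤ)) (s := -(r + 1 : ℤ)) i (.all _ _)
  rw [show ((a + r + 1 : ℕ) : ℤ) + -(r + 1) = a by push_cast; ring, Ring.choose_natCast,
    Nat.sum_antidiagonal_eq_sum_range_succ_mk] at h
  rw [h]
  refine sum_congr rfl fun j _ => ?_
  rw [Ring.choose_natCast, hneg]
  ring

theorem Nat.choose_mul_choose_sub_div_choose {K : Type*} [Field K] [CharZero K] {n m i j : ℕ}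
    (hji : j ≤ i) (him : i ≤ m) :
    (n.choose j * (n - j).choose (i - j) : K) / m.choose j
      = n.choose i * (m - j).choose (i - j) / m.choose i := by
  have hn : (n.choose i * i.choose j : K) = n.choose j * (n - j).choose (i - j) := by
    exact_mod_cast Nat.choose_mul hji
  have hm : (m.choose i * i.choose j : K) = m.choose j * (m - j).choose (i - j) := by
    exact_mod_cast Nat.choose_mul hji
  have hmi : (m.choose i : K) ≠ 0 := by exact_mod_cast (Nat.choose_pos him).ne'
  have hmj : (m.choose j : K) ≠ 0 := by exact_mod_cast (Nat.choose_pos (hji.trans him)).ne'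
  rw [← hn, div_eq_div_iff hmj hmi]
  linear_combination (n.choose i : K) * hm

theorem Polynomial.X_sub_one_pow (R : Type*) [CommRing R] (n : ℕ) :
    (X - 1 : R[X]) ^ n = ∑ k ∈ range (n + 1), C ((-1) ^ k * n.choose k : R) * X ^ (n - k) := by
  rw [sub_eq_neg_add, add_pow]
  refine sum_congr rfl fun k _ => ?_
  simp only [map_mul, map_pow, map_neg, map_one, map_natCast]
  ring

theorem hypergeometric_shift_coeff {l p i : ℕ} (hip : i ≤ p) (hpl : p ≤ l) :
    ∑ j ∈ range (i + 1), (p.choose j * (2 * l - p + 1).choose j : ℚ) / l.choose j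
        * ((-1) ^ (i - j) * (p - j).choose (i - j))
      = (p.choose i * (l - p + i).choose i : ℚ) / l.choose i := by
  have hterm : ∀ j ∈ range (i + 1),
      (p.choose j * (2 * l - p + 1).choose j : ℚ) / l.choose j
          * ((-1) ^ (i - j) * (p - j).choose (i - j))
        = p.choose i / l.choose i
          * ((-1) ^ (i - j) * ((2 * l - p + 1).choose j * (l - i + (i - j)).choose (i - j)) : ℤ) :=
        by
    intro j hj
    have hji : j ≤ i := Nat.lt_succ_iff.mp (mem_range.mp hj)
    have hsub : l - i + (i - j) = l - j := by omega
    have hratio := Nat.choose_mul_choose_sub_div_choose (K := ℚ) (n := p) hji (hip.trans hpl)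
    rw [hsub]
    push_cast
    linear_combination ((-1) ^ (i - j) * ((2 * l - p + 1).choose j : ℚ)) * hratio
  have hupper : 2 * l - p + 1 = (l - p + i) + (l - i) + 1 := by omega
  rw [sum_congr rfl hterm, ← mul_sum, ← Int.cast_sum, hupper,
    sum_range_neg_one_pow_mul_choose_mul_choose]
  push_cast
  ring

theorem hypergeometric_shift_identity (l p : ℕ) (hpl : p ≤ l) :
    ∑ i ∈ range (p + 1),
        C ((p.choose i * (l - p + i).choose i : ℚ) / (l.choose i : ℚ)) * X ^ (p - i)
      = ∑ j ∈ range (p + 1),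
        C ((p.choose j * (2 * l - p + 1).choose j : ℚ) / (l.choose j : ℚ)) * (X - 1) ^ (p - j) := by
  set b : ℕ → ℚ := fun j => (p.choose j * (2 * l - p + 1).choose j : ℚ) / l.choose j
  calc _ = ∑ i ∈ range (p + 1), ∑ j ∈ range (i + 1),
          C (b j * ((-1) ^ (i - j) * (p - j).choose (i - j))) * X ^ (p - i) := by
        refine sum_congr rfl fun i hi => ?_
        rw [← hypergeometric_shift_coeff (Nat.lt_succ_iff.mp (mem_range.mp hi)) hpl, map_sum,
          sum_mul]
    _ = ∑ j ∈ range (p + 1), ∑ k ∈ range (p + 1 - j),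
          C (b j * ((-1) ^ k * (p - j).choose k)) * X ^ (p - j - k) := by
        rw [← sum_range_diag_flip]
        refine sum_congr rfl fun i _ => sum_congr rfl fun j hj => ?_
        rw [Nat.sub_sub, Nat.add_sub_cancel' (Nat.lt_succ_iff.mp (mem_range.mp hj))]
    _ = _ := by
        refine sum_congr rfl fun j hj => ?_
        rw [X_sub_one_pow, mul_sum, Nat.sub_add_comm (Nat.lt_succ_iff.mp (mem_range.mp hj))]
        refine sum_congr rfl fun k _ => ?_
        rw [map_mul, mul_assoc]
end

section
/- For integers 0 ≤ p ≤ l, the identity Σ_{s=0}^{l} C(l,s)·[Σ_{j=0}^{p} (−1)^j C(p,j) C(2l−p+1, j) C(l,j)^{−2} C(s,j)]·α^s = (1+α)^{l−p}·Σ_{i=0}^{p} (−1)^i C(p,i) C(l−p+i, i) C(l,i)^{−1} α^i holds as polynomials in α over ℚ. -/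
/-!
Summing over `s` first, `∑ₛ C(l,s) C(s,j) αˢ = C(l,j) αʲ (1+α)^(l-j)`, so the left side
is `(1+α)^(l-p) ∑ⱼ cⱼ αʲ (1+α)^(p-j)` with `cⱼ = (-1)ʲ C(p,j) C(2l-p+1,j) / C(l,j)`.
Re-expanding `(1+α)^(p-j)`, the coefficient of `αⁱ` is `∑ⱼ cⱼ C(p-j,i-j)`; after
`C(p,j) C(p-j,i-j) = C(p,i) C(i,j)` (and the same with `l`) this is `C(p,i)/C(l,i)` times
`∑ⱼ (-1)ʲ C(2l-p+1,j) C(l-j,i-j)`. Upper negation turns `(-1)^(i-j) C(l-j,i-j)` into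
`C(-(l-i+1), i-j)`, and Chu–Vandermonde sums the convolution to `C(l-p+i, i)`.
-/

open Finset Polynomial

theorem sum_neg_one_pow_mul_choose_mul_choose_sub {m i : ℕ} (hi : i ≤ m) (n : ℕ) :
    ∑ j ∈ range (i + 1), (-1 : ℤ) ^ j * (n + m + 1).choose j * (m - j).choose (i - j)
      = (-1) ^ i * (n + i).choose i := by
  have upper_neg : ∀ j ∈ range (i + 1),
      Ring.choose (-(m - i + 1 : ℤ)) (i - j) = (-1) ^ (i - j) * (m - j).choose (i - j) := by
    intro j hj
    have : (m - i + 1 : ℤ) + (i - j : ℕ) - 1 = ((m - j : ℕ) : ℤ) := by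
      have := mem_range.mp hj; omega
    rw [Ring.choose_neg, this, Ring.choose_natCast, Units.smul_def, Int.coe_negOnePow_natCast,
      smul_eq_mul]
  have vandermonde :=
    Ring.add_choose_eq (r := ((n + m + 1 : ℕ) : ℤ)) (s := -(m - i + 1 : ℤ)) i (Commute.all _ _)
  rw [Nat.sum_antidiagonal_eq_sum_range_succ (fun a b => Ring.choose _ a * Ring.choose _ b),
    show ((n + m + 1 : ℕ) : ℤ) + -(m - i + 1) = ((n + i : ℕ) : ℤ) by push_cast; ring,
    Ring.choose_natCast, sum_congr rfl fun j hj => by rw [upper_neg j hj, Ring.choose_natCast]]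
    at vandermonde
  rw [vandermonde, mul_sum]
  refine sum_congr rfl fun j hj => ?_
  have hj : j ≤ i := Nat.lt_succ_iff.mp (mem_range.mp hj)
  have hsq : ((-1 : ℤ) ^ (i - j)) ^ 2 = 1 := by
    rw [← pow_mul, pow_mul', neg_one_sq, one_pow]
  rw [← pow_sub_mul_pow _ hj]
  linear_combination -(-1 : ℤ) ^ j * ((n + m + 1).choose j * (m - j).choose (i - j) : ℤ) * hsq

section

variable {R : Type*} [CommSemiring R]

theorem sum_choose_mul_choose_mul_pow (x : R) (l j : ℕ) :
    ∑ s ∈ range (l + 1), (l.choose s * s.choose j : R) * x ^ s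
      = l.choose j * x ^ j * (1 + x) ^ (l - j) := by
  have vanish : ∀ s < j, (l.choose s * s.choose j : R) * x ^ s = 0 := fun s hs => by
    rw [Nat.choose_eq_zero_of_lt hs, Nat.cast_zero, mul_zero, zero_mul]
  rcases lt_or_ge l j with hlj | hjl
  · rw [Nat.choose_eq_zero_of_lt hlj, Nat.cast_zero, zero_mul, zero_mul]
    exact sum_eq_zero fun s hs => vanish s (mem_range.mp hs |>.trans_le hlj)
  rw [← sum_range_add_sum_Ico _ (by omega : j ≤ l + 1),
    sum_eq_zero fun s hs => vanish s (mem_range.mp hs), zero_add, sum_Ico_eq_sum_range,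
    show l + 1 - j = l - j + 1 by omega, add_comm 1 x, add_pow, mul_sum]
  refine sum_congr rfl fun t ht => ?_
  have hc : l.choose (j + t) * (j + t).choose j = l.choose j * (l - j).choose t := by
    have := mem_range.mp ht
    simpa using Nat.choose_mul (n := l) (k := j + t) (s := j) (by omega)
  rw [← Nat.cast_mul, hc, one_pow, pow_add]
  push_cast
  ring

theorem sum_mul_pow_mul_one_add_pow (x : R) (a : ℕ → R) (p : ℕ) :
    ∑ j ∈ range (p + 1), a j * x ^ j * (1 + x) ^ (p - j)
      = ∑ i ∈ range (p + 1),
          (∑ j ∈ range (i + 1), a j * (p - j).choose (i - j)) * x ^ i := by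
  have expand : ∀ j ∈ range (p + 1), a j * x ^ j * (1 + x) ^ (p - j)
      = ∑ i ∈ Ico j (p + 1), a j * (p - j).choose (i - j) * x ^ i := by
    intro j hj
    rw [sum_Ico_eq_sum_range, show p + 1 - j = p - j + 1 by have := mem_range.mp hj; omega,
      add_comm 1 x, add_pow, mul_sum]
    refine sum_congr rfl fun t _ => ?_
    rw [one_pow, Nat.add_sub_cancel_left, pow_add]
    ring
  rw [sum_congr rfl expand, sum_comm' (t' := range (p + 1)) (s' := fun i => range (i + 1))]
  · simp_rw [sum_mul]
  · intro j i
    simp only [mem_range, mem_Ico]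
    omega

end

theorem sum_neg_one_pow_mul_choose_div_choose_mul_choose {l p i : ℕ} (hip : i ≤ p)
    (hpl : p ≤ l) :
    ∑ j ∈ range (i + 1), (-1 : ℚ) ^ j * (p.choose j * (2 * l - p + 1).choose j) / l.choose j
        * (p - j).choose (i - j)
      = (-1 : ℚ) ^ i * (p.choose i * (l - p + i).choose i) / l.choose i := by
  have hli : (l.choose i : ℚ) ≠ 0 := Nat.cast_ne_zero.mpr (Nat.choose_pos (hip.trans hpl)).ne'
  have factor : ∀ j ∈ range (i + 1),
      (-1 : ℚ) ^ j * (p.choose j * (2 * l - p + 1).choose j) / l.choose j * (p - j).choose (i - j)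
        = p.choose i / l.choose i *
            ((-1 : ℚ) ^ j * (l - p + l + 1).choose j * (l - j).choose (i - j)) := by
    intro j hj
    have hji : j ≤ i := Nat.lt_succ_iff.mp (mem_range.mp hj)
    have hlj : (l.choose j : ℚ) ≠ 0 := Nat.cast_ne_zero.mpr (Nat.choose_pos (by omega)).ne'
    have hp : (p.choose i * i.choose j : ℚ) = p.choose j * (p - j).choose (i - j) := by
      exact_mod_cast Nat.choose_mul hji
    have hl : (l.choose i * i.choose j : ℚ) = l.choose j * (l - j).choose (i - j) := by
      exact_mod_cast Nat.choose_mul (n := l) hji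
    rw [show 2 * l - p + 1 = l - p + l + 1 by omega]
    field_simp
    linear_combination ((l - p + l + 1).choose j : ℚ) * (p.choose i * hl - l.choose i * hp)
  have core := congrArg (Int.cast : ℤ → ℚ)
    (sum_neg_one_pow_mul_choose_mul_choose_sub (hip.trans hpl) (l - p))
  push_cast at core
  rw [sum_congr rfl factor, ← mul_sum, core]
  ring

/-- Theorem 3.3 of the paper: `Σ_s C(l,s)·Q_p(s)·α^s = (1+α)^{l−p}·G_p^l(α)`
as polynomials in `α` over `ℚ`. -/
theorem hahn_jacobi_identity (l p : ℕ) (hpl : p ≤ l) :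
    ∑ s ∈ range (l + 1),
        C ((l.choose s : ℚ) *
            ∑ j ∈ range (p + 1), (-1 : ℚ) ^ j *
              (p.choose j * (2 * l - p + 1).choose j * s.choose j : ℚ) / (l.choose j : ℚ) ^ 2) *
          X ^ s
      = (1 + X) ^ (l - p) *
          ∑ i ∈ range (p + 1),
            C ((-1 : ℚ) ^ i * (p.choose i * (l - p + i).choose i : ℚ) / (l.choose i : ℚ)) *
              X ^ i := by
  set c : ℕ → ℚ := fun j => (-1) ^ j * (p.choose j * (2 * l - p + 1).choose j)
  calc _ = ∑ j ∈ range (p + 1), C (c j / l.choose j ^ 2) *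
        ∑ s ∈ range (l + 1), (l.choose s * s.choose j : ℚ[X]) * X ^ s := by
        simp only [mul_sum, sum_mul, map_sum]
        rw [sum_comm]
        refine sum_congr rfl fun j _ => sum_congr rfl fun s _ => ?_
        simp only [c, ← C_eq_natCast, ← mul_assoc, ← C_mul]
        congr 2
        ring
    _ = (1 + X) ^ (l - p) *
          ∑ j ∈ range (p + 1), C (c j / l.choose j) * X ^ j * (1 + X) ^ (p - j) := by
        simp only [sum_choose_mul_choose_mul_pow, mul_sum]
        refine sum_congr rfl fun j hj => ?_
        have hjp : j ≤ p := Nat.lt_succ_iff.mp (mem_range.mp hj)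
        have hlj : (l.choose j : ℚ) ≠ 0 :=
          Nat.cast_ne_zero.mpr (Nat.choose_pos (hjp.trans hpl)).ne'
        have cancel : C (c j / l.choose j) = C (c j / l.choose j ^ 2) * C (l.choose j : ℚ) := by
          rw [← C_mul]
          field_simp
        rw [← C_eq_natCast, ← Nat.sub_add_sub_cancel hpl hjp, pow_add, cancel]
        ring
    _ = _ := by
        rw [sum_mul_pow_mul_one_add_pow]
        congr 1
        refine sum_congr rfl fun i hi => ?_
        simp only [← C_eq_natCast, ← C_mul, ← map_sum]
        rw [sum_neg_one_pow_mul_choose_div_choose_mul_choose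
          (Nat.lt_succ_iff.mp (mem_range.mp hi)) hpl]
end

section
/- For the left side of the n=2 transition polynomial: Σ_{s=0}^{l} C(l,s)·Q_p(s)·α^s = Σ_{j=0}^{p} (−1)^j C(p,j) C(2l−p+1,j) C(l,j)^{−1} α^j (1+α)^{l−j}, where Q_p(s) = Σ_{j=0}^{p} (−1)^j C(p,j) C(2l−p+1,j) C(l,j)^{−2} C(s,j), for 0 ≤ p ≤ l. -/
/-! Expanding `Q_p(s)` and exchanging the two sums reduces the identity to one value of `j` at a time,
where `C(l,s) C(s,j) = C(l,j) C(l-j,s-j)` and the binomial theorem give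
`Σ_s C(l,s) C(s,j) x^s = C(l,j) x^j (1+x)^(l-j)`. -/

open Finset Polynomial

theorem sum_range_choose_mul_choose_mul_pow {R : Type*} [CommSemiring R] (x : R) (l j : ℕ) :
    ∑ s ∈ range (l + 1), (l.choose s * s.choose j : R) * x ^ s
      = l.choose j * x ^ j * (1 + x) ^ (l - j) := by
  obtain hlj | hjl := lt_or_ge l j
  · rw [Nat.choose_eq_zero_of_lt hlj, Nat.cast_zero, zero_mul, zero_mul]
    refine sum_eq_zero fun s hs => ?_
    rw [Nat.choose_eq_zero_of_lt (n := s) (by grind), Nat.cast_zero, mul_zero, zero_mul]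
  obtain ⟨m, rfl⟩ := Nat.exists_eq_add_of_le hjl
  have hlow : ∑ s ∈ range j, ((j + m).choose s * s.choose j : R) * x ^ s = 0 :=
    sum_eq_zero fun s hs => by
      rw [Nat.choose_eq_zero_of_lt (mem_range.1 hs), Nat.cast_zero, mul_zero, zero_mul]
  rw [Nat.add_sub_cancel_left, add_comm 1 x, add_pow, mul_sum, add_assoc, sum_range_add, hlow,
    zero_add]
  refine sum_congr rfl fun t _ => ?_
  have hchoose := Nat.choose_mul (n := j + m) (Nat.le_add_right j t)
  rw [Nat.add_sub_cancel_left, Nat.add_sub_cancel_left] at hchoose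
  rw [one_pow, mul_one, pow_add, ← Nat.cast_mul, hchoose, Nat.cast_mul]
  ring

theorem sum_range_choose_mul_sum_mul_choose_mul_pow {R : Type*} [CommSemiring R] (x : R)
    (w : ℕ → R) (l p : ℕ) :
    ∑ s ∈ range (l + 1), (l.choose s * ∑ j ∈ range (p + 1), w j * s.choose j) * x ^ s
      = ∑ j ∈ range (p + 1), w j * l.choose j * x ^ j * (1 + x) ^ (l - j) := by
  simp_rw [mul_sum, sum_mul]
  rw [sum_comm]
  refine sum_congr rfl fun j _ => ?_
  rw [mul_assoc (w j), mul_assoc (w j), ← sum_range_choose_mul_choose_mul_pow, mul_sum]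
  exact sum_congr rfl fun s _ => by ring

theorem div_sq_mul_self {G₀ : Type*} [CommGroupWithZero G₀] (a c : G₀) : c / a ^ 2 * a = c / a := by
  rw [sq, div_mul_eq_mul_div, mul_div_assoc, div_self_mul_self', div_eq_mul_inv]

theorem hahn_sum_expansion_general (l p : ℕ) :
    ∑ s ∈ range (l + 1),
        C ((l.choose s : ℚ) *
            ∑ j ∈ range (p + 1), (-1 : ℚ) ^ j *
              (p.choose j * (2 * l - p + 1).choose j * s.choose j : ℚ) / (l.choose j : ℚ) ^ 2) *
          X ^ s
      = ∑ j ∈ range (p + 1),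
          C ((-1 : ℚ) ^ j * (p.choose j * (2 * l - p + 1).choose j : ℚ) / (l.choose j : ℚ)) *
            X ^ j * (1 + X) ^ (l - j) := by
  set c : ℕ → ℚ := fun j => (-1) ^ j * (p.choose j * (2 * l - p + 1).choose j)
  have hterm (s j : ℕ) : (-1 : ℚ) ^ j *
      (p.choose j * (2 * l - p + 1).choose j * s.choose j : ℚ) / (l.choose j : ℚ) ^ 2
        = c j / (l.choose j : ℚ) ^ 2 * s.choose j := by
    simp only [c]; ring
  simp_rw [hterm, map_mul, map_sum, map_mul, map_natCast]
  rw [sum_range_choose_mul_sum_mul_choose_mul_pow]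
  refine sum_congr rfl fun j _ => ?_
  rw [← map_natCast C, ← map_mul, div_sq_mul_self]

/-- `Σ_{s=0}^{l} C(l,s)·Q_p(s)·α^s = Σ_{j=0}^{p} (−1)^j C(p,j)C(2l−p+1,j)C(l,j)^{−1} α^j (1+α)^{l−j}`,
where `Q_p(s) = Σ_{j=0}^{p} (−1)^j C(p,j)C(2l−p+1,j)C(l,j)^{−2}C(s,j)`, as polynomials in `α` over `ℚ`. -/
theorem hahn_sum_expansion (l p : ℕ) (hpl : p ≤ l) :
    ∑ s ∈ range (l + 1),
        C ((l.choose s : ℚ) *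
            ∑ j ∈ range (p + 1), (-1 : ℚ) ^ j *
              (p.choose j * (2 * l - p + 1).choose j * s.choose j : ℚ) / (l.choose j : ℚ) ^ 2) *
          X ^ s
      = ∑ j ∈ range (p + 1),
          C ((-1 : ℚ) ^ j * (p.choose j * (2 * l - p + 1).choose j : ℚ) / (l.choose j : ℚ)) *
            X ^ j * (1 + X) ^ (l - j) :=
  hahn_sum_expansion_general l p
end

section
/- For a permutation h of {1,…,nl} preserving each residue class mod l (i.e., h(x) ≡ x mod l for all x), and K the subgroup of S_{nl} preserving each block {(q−1)l+1,…,ql}: (1/|K|)·Σ_{k∈K} fix(kh) = (1/l)·fix(h), where fix denotes the number of fixed points on {1,…,nl}, provided l ≥ 1. -/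
/-!
Double count the pairs `(k, x)` with `k (h x) = x`. Since `k` preserves rows and `h` preserves
columns, `k (h x) = x` forces `h x = x` and `k x = x`. For a fixed point `x` of `h`, the stabilizer
of `x` in `K` has index `l`, because `K` moves `x` transitively through the `l` points of its row.
-/

open Finset

def fixCount {β : Type*} [Fintype β] [DecidableEq β] (σ : Equiv.Perm β) : ℕ :=
  (Finset.univ.filter fun x => σ x = x).card

open Equiv MulAction

theorem sum_fixCount_mul {X : Type*} [Fintype X] [DecidableEq X] (s : Finset (Perm X))
    (h : Perm X) : ∑ k ∈ s, fixCount (k * h) = ∑ x, #{k ∈ s | (k * h) x = x} := by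
  simp only [fixCount, card_filter]
  exact sum_comm

def rowGroup (α β : Type*) : Subgroup (Perm (α × β)) where
  carrier := {k | ∀ p, (k p).1 = p.1}
  mul_mem' ha hb p := (ha _).trans (hb p)
  one_mem' _ := rfl
  inv_mem' {k} hk p := by simpa using (hk (k⁻¹ p)).symm

namespace rowGroup

variable {α β : Type*}

theorem orbit_eq (p : α × β) : orbit (rowGroup α β) p = {x | x.1 = p.1} := by
  classical
  ext x
  refine ⟨fun ⟨k, hk⟩ => hk ▸ k.2 p, fun hx => ?_⟩
  refine ⟨⟨prodCongrRight fun _ => swap p.2 x.2, fun _ => rfl⟩, ?_⟩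
  exact Prod.ext hx.symm (swap_apply_left p.2 x.2)

theorem card_stabilizer_mul (p : α × β) :
    Nat.card (stabilizer (rowGroup α β) p) * Nat.card β = Nat.card (rowGroup α β) := by
  rw [← (stabilizer (rowGroup α β) p).card_mul_index, index_stabilizer, orbit_eq]
  congr 1
  exact (Nat.card_congr ⟨fun x => x.1.2, fun b => ⟨(p.1, b), rfl⟩,
    fun x => Subtype.ext (Prod.ext x.2.symm rfl), fun _ => rfl⟩).symm

theorem mul_apply_eq_self_iff {k h : Perm (α × β)} (hk : k ∈ rowGroup α β)
    (hh : ∀ p, (h p).2 = p.2) {p : α × β} : (k * h) p = p ↔ h p = p ∧ k p = p := by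
  refine ⟨fun hkh => ?_, fun ⟨hp, hkp⟩ => by rw [Perm.mul_apply, hp, hkp]⟩
  have hp : h p = p := Prod.ext (by rw [← hk (h p), ← Perm.mul_apply, hkh]) (hh p)
  exact ⟨hp, by rwa [Perm.mul_apply, hp] at hkh⟩

variable [Fintype α] [Fintype β] [DecidableEq α] [DecidableEq β]

-- Unfolds to the instance deciding the filter predicate of the main theorem, so `change` can
-- pass between the two.
instance : DecidablePred (· ∈ rowGroup α β) :=
  fun k => inferInstanceAs (Decidable (∀ p, (k p).1 = p.1))

theorem card_filter_apply_eq_self_mul (p : α × β) :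
    #{k : Perm (α × β) | k ∈ rowGroup α β ∧ k p = p} * Fintype.card β =
      #{k | k ∈ rowGroup α β} := by
  have hstab : Nat.card (stabilizer (rowGroup α β) p) =
      #{k : Perm (α × β) | k ∈ rowGroup α β ∧ k p = p} := by
    rw [← Fintype.card_subtype, ← Nat.card_eq_fintype_card]
    exact Nat.card_congr (subtypeSubtypeEquivSubtypeInter _ fun k : Perm (α × β) => k p = p)
  rw [← hstab, ← Nat.card_eq_fintype_card, card_stabilizer_mul, ← Fintype.card_subtype,
    Nat.card_eq_fintype_card]

theorem sum_fixCount_mul_mul_card (h : Perm (α × β)) (hh : ∀ p, (h p).2 = p.2) :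
    (∑ k ∈ {k | k ∈ rowGroup α β}, fixCount (k * h)) * Fintype.card β =
      fixCount h * #{k | k ∈ rowGroup α β} := by
  set K : Finset (Perm (α × β)) := {k | k ∈ rowGroup α β}
  have hfiber (x : α × β) :
      #{k ∈ K | (k * h) x = x} * Fintype.card β = if h x = x then #K else 0 := by
    have hfilter : {k ∈ K | (k * h) x = x} = {k ∈ K | h x = x ∧ k x = x} :=
      filter_congr fun k hk => mul_apply_eq_self_iff (mem_filter.1 hk).2 hh
    rw [hfilter]
    split_ifs with hx
    · simpa only [hx, true_and, K, filter_filter] using card_filter_apply_eq_self_mul x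
    · simp [hx]
  calc (∑ k ∈ K, fixCount (k * h)) * Fintype.card β
      = ∑ x, #{k ∈ K | (k * h) x = x} * Fintype.card β := by rw [sum_fixCount_mul, sum_mul]
    _ = ∑ x, if h x = x then #K else 0 := sum_congr rfl fun x _ => hfiber x
    _ = fixCount h * #K := by rw [sum_ite, sum_const_zero, add_zero, sum_const, smul_eq_mul]; rfl

end rowGroup

-- `[nl]` is modelled as `Fin n × Fin l`: `(q, x)` lies in block `q` and in residue class `x`,
-- so `K` is `rowGroup (Fin n) (Fin l)` and `hH` says that `h` lies in the column group.
/-- Model `[nl]` as `Fin n × Fin l`: the block of `(q, x)` is `q` (row group `K`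
preserves it), and the residue class mod `l` of `(q, x)` is `x` (the column group
`H` preserves it).  For `h ∈ H`, `(1/|K|)·Σ_{k∈K} fix(kh) = (1/l)·fix(h)`. -/
theorem average_fix_over_row_group (n l : ℕ) (hl : 0 < l)
    (h : Equiv.Perm (Fin n × Fin l)) (hH : ∀ p, (h p).2 = p.2) :
    (∑ k ∈ Finset.univ.filter
        (fun k : Equiv.Perm (Fin n × Fin l) => ∀ p, (k p).1 = p.1),
        (fixCount (k * h) : ℚ)) /
      ((Finset.univ.filter
        (fun k : Equiv.Perm (Fin n × Fin l) => ∀ p, (k p).1 = p.1)).card : ℚ)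
      = (fixCount h : ℚ) / (l : ℚ) := by
  change (∑ k ∈ {k | k ∈ rowGroup (Fin n) (Fin l)}, (fixCount (k * h) : ℚ)) /
    (#{k | k ∈ rowGroup (Fin n) (Fin l)} : ℚ) = _
  have hK : 0 < #{k | k ∈ rowGroup (Fin n) (Fin l)} :=
    card_pos.2 ⟨1, mem_filter.2 ⟨mem_univ _, one_mem _⟩⟩
  have key := rowGroup.sum_fixCount_mul_mul_card h hH
  rw [Fintype.card_fin] at key
  rw [div_eq_div_iff (by positivity) (by positivity), ← Nat.cast_sum]
  exact_mod_cast key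
end
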